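/- Let B be a torsion abelian group such that for every prime number ℓ the ℓ-torsion subgroup B[ℓ] = {b ∈ B : ℓ·b = 0} is finite. Then every quotient group B/A of B which has finite exponent (i.e., is annihilated by some positive integer n) is finite. -/

import Mathlib

/-!
The `n`-torsion `B[n]` is finite for every `n ≠ 0`: multiplication by `b` maps `B[a * b]` to `B[a]`
with fibres that are translates of `B[b]`. For a finite subgroup `K` of `B`, the index of `n • K`
equals `|K[n]| ≤ |B[n]|`. A finite subset of `B ⧸ n • B` lifts into a finitely generated, hence
finite, subgroup `K`, whose image is a quotient of `K ⧸ n • K`; so `B ⧸ n • B` has at most `|B[n]|`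
elements. A quotient of exponent `n` is a quotient of `B ⧸ n • B`.
-/

open AddSubgroup

section

variable {G : Type*} [AddCommGroup G]

theorem finite_setOf_nsmul_eq {n : ℕ} (h : {g : G | n • g = 0}.Finite) (y : G) :
    {g : G | n • g = y}.Finite := by
  rcases Set.eq_empty_or_nonempty {g : G | n • g = y} with hy | ⟨g₀, hg₀⟩
  · simp [hy]
  · refine (h.preimage (sub_left_injective (b := g₀)).injOn).subset fun g hg => ?_
    simp_all [smul_sub]

theorem finite_setOf_nsmul_eq_zero_of_prime
    (h : ∀ p : ℕ, p.Prime → {g : G | p • g = 0}.Finite) {n : ℕ} (hn : n ≠ 0) :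
    {g : G | n • g = 0}.Finite := by
  induction n using Nat.recOnMul with
  | zero => exact absurd rfl hn
  | one => simp
  | prime p hp => exact h p hp
  | mul a b iha ihb =>
    obtain ⟨ha, hb⟩ := mul_ne_zero_iff.mp hn
    have hpre : {g : G | (a * b) • g = 0} = (b • ·) ⁻¹' {g | a • g = 0} := by
      ext g; simp [mul_smul]
    rw [hpre]
    exact (iha ha).preimage' fun y _ => finite_setOf_nsmul_eq (ihb hb) y

theorem AddMonoidHom.card_range_le_card_ker_nsmul {H : Type*} [AddGroup H] [Finite G]
    (f : G →+ H) {n : ℕ} (hf : ∀ g, f (n • g) = 0) :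
    Nat.card f.range ≤ Nat.card (nsmulAddMonoidHom n : G →+ G).ker := by
  rw [← index_ker, ← index_range]
  refine Nat.le_of_dvd (Nat.pos_of_ne_zero index_ne_zero_of_finite) (index_dvd_of_le ?_)
  rintro _ ⟨g, rfl⟩
  exact hf g

theorem AddSubgroup.card_ker_nsmul_le (K : AddSubgroup G) {n : ℕ}
    (h : {g : G | n • g = 0}.Finite) :
    Nat.card (nsmulAddMonoidHom n : K →+ K).ker ≤ Nat.card {g : G | n • g = 0} := by
  have := h.to_subtype
  refine Nat.card_le_card_of_injective (fun x => ⟨x.1, congrArg Subtype.val x.2⟩) ?_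
  intro x y hxy
  have hval := congrArg Subtype.val hxy
  dsimp at hval
  exact Subtype.ext (Subtype.ext hval)

theorem finite_quotient_range_nsmul (htors : IsAddTorsion G) {n : ℕ}
    (h : {g : G | n • g = 0}.Finite) :
    Finite (G ⧸ (nsmulAddMonoidHom n : G →+ G).range) := by
  set nG := (nsmulAddMonoidHom n : G →+ G).range
  by_contra hinf
  rw [not_finite_iff_infinite] at hinf
  obtain ⟨t, -, ht⟩ :=
    (Set.infinite_univ (α := G ⧸ nG)).exists_subset_card_eq (Nat.card {g : G | n • g = 0} + 1)
  let K := AddSubgroup.closure (Quotient.out '' (t : Set (G ⧸ nG)))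
  have : Finite K := AddCommGroup.finite_of_fg_isAddTorsion K (htors.addSubgroup K)
  let f := (QuotientAddGroup.mk' nG).comp K.subtype
  have ht_range : (t : Set (G ⧸ nG)) ⊆ (f.range : Set (G ⧸ nG)) := fun x hx =>
    ⟨⟨x.out, AddSubgroup.subset_closure ⟨x, hx, rfl⟩⟩, QuotientAddGroup.out_eq' x⟩
  have hf : ∀ k, f (n • k) = 0 := fun k =>
    (QuotientAddGroup.eq_zero_iff _).mpr ⟨k, rfl⟩
  have hcard := calc
    t.card = Nat.card (t : Set (G ⧸ nG)) := (Nat.card_eq_finsetCard t).symm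
    _ ≤ Nat.card f.range := Nat.card_mono (f.coe_range ▸ Set.finite_range f) ht_range
    _ ≤ Nat.card (nsmulAddMonoidHom n : K →+ K).ker := f.card_range_le_card_ker_nsmul hf
    _ ≤ Nat.card {g : G | n • g = 0} := K.card_ker_nsmul_le h
  omega

end

/-- Let `B` be a torsion abelian group whose `ℓ`-torsion subgroup `B[ℓ]`
is finite for every prime `ℓ`. Then every quotient `B ⧸ A` of `B` of finite exponent
is finite. -/
theorem stmt_2 (B : Type) [AddCommGroup B]
    (htors : ∀ b : B, ∃ n : ℕ, 0 < n ∧ n • b = 0)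
    (hfin : ∀ ℓ : ℕ, ℓ.Prime → {b : B | ℓ • b = 0}.Finite)
    (A : AddSubgroup B) (n : ℕ) (hn : 0 < n)
    (hA : ∀ x : B ⧸ A, n • x = 0) :
    Finite (B ⧸ A) := by
  have : ((nsmulAddMonoidHom n : B →+ B).range).FiniteIndex :=
    finiteIndex_iff_finite_quotient.mpr <|
      finite_quotient_range_nsmul (fun b => isOfFinAddOrder_iff_nsmul_eq_zero.mpr (htors b))
        (finite_setOf_nsmul_eq_zero_of_prime hfin hn.ne')
  have hle : (nsmulAddMonoidHom n : B →+ B).range ≤ A := by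
    rintro _ ⟨b, rfl⟩
    exact (QuotientAddGroup.eq_zero_iff _).mp (hA b)
  exact finiteIndex_iff_finite_quotient.mp (finiteIndex_of_le hle)
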